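/- Completeness of NB-LoRA II (low-rank case): let S ∈ ℝ^{r×r} be diagonal with positive decreasing entries, r ≤ min(m,n), and let W ∈ ℝ^{m×n} with rank(W) ≤ r and σ_j(W) ≤ S_{jj} for all j ≤ r. Then there exist A ∈ ℝ^{r×m}, B ∈ ℝ^{r×n} with A Aᵀ + B Bᵀ = I_r such that W = 2 Aᵀ S B. -/

import Mathlib

open Matrix

/-- `sval W j` is the `j`-th largest singular value of `W` (zero beyond the rank). -/
noncomputable def sval {m n : ℕ} (W : Matrix (Fin m) (Fin n) ℝ) (j : ℕ) : ℝ :=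
  if h : j < n then
    Real.sqrt ((Matrix.isHermitian_iff_isSymm.mpr (by simp [Matrix.IsSymm, Matrix.transpose_mul]) : (Wᵀ * W).IsHermitian).eigenvalues
      (Tuple.sort (Matrix.isHermitian_iff_isSymm.mpr (by simp [Matrix.IsSymm, Matrix.transpose_mul]) : (Wᵀ * W).IsHermitian).eigenvalues (Fin.rev ⟨j, h⟩)))
  else 0

/-- Completeness of NB-LoRA II (low-rank case): if `S = diag s` has positive decreasing
diagonal, `r ≤ min(m, n)`, `rank W ≤ r` and `σⱼ(W) ≤ sⱼ` for all `j < r`, then there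
exist `A, B` with `A Aᵀ + B Bᵀ = I` and `W = 2 Aᵀ S B`. -/
theorem stmt_9 (r m n : ℕ) (hrm : r ≤ m) (hrn : r ≤ n)
    (s : Fin r → ℝ) (hs : ∀ j, 0 < s j) (hdec : ∀ i j : Fin r, i ≤ j → s j ≤ s i)
    (W : Matrix (Fin m) (Fin n) ℝ) (hrank : W.rank ≤ r)
    (hσ : ∀ j : Fin r, sval W (j : ℕ) ≤ s j) :
    ∃ (A : Matrix (Fin r) (Fin m) ℝ) (B : Matrix (Fin r) (Fin n) ℝ),
      A * Aᵀ + B * Bᵀ = 1 ∧ W = (2 : ℝ) • (Aᵀ * Matrix.diagonal s * B) := by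
  classical
  have hM : (Wᵀ * W).IsHermitian := Matrix.isHermitian_iff_isSymm.mpr (by simp [Matrix.IsSymm, Matrix.transpose_mul])
  have hPSD : (Wᵀ * W).PosSemidef := by
    simpa [Matrix.conjTranspose_eq_transpose_of_trivial] using
      Matrix.posSemidef_conjTranspose_mul_self W
  set μ : Fin n → ℝ := hM.eigenvalues with hμdef
  set p : Fin n → Fin n := fun i => Tuple.sort μ (Fin.rev i) with hpdef
  set v : Fin n → (Fin n → ℝ) := fun i => ⇑(hM.eigenvectorBasis (p i)) with hvdef
  set σ' : Fin n → ℝ := fun i => Real.sqrt (μ (p i)) with hσdef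
  have hμ0 : ∀ i, 0 ≤ μ i := hPSD.eigenvalues_nonneg
  have hσ0 : ∀ i, 0 ≤ σ' i := fun i => Real.sqrt_nonneg _
  have hσsq : ∀ i, σ' i ^ 2 = μ (p i) := fun i => Real.sq_sqrt (hμ0 _)
  have hpinj : Function.Injective p :=
    (Equiv.injective _).comp Fin.rev_injective
  have heig : ∀ i, (Wᵀ * W) *ᵥ v i = μ (p i) • v i := fun i =>
    hM.mulVec_eigenvectorBasis (p i)
  have horth : ∀ i j, v i ⬝ᵥ v j = if i = j then 1 else 0 := by
    intro i j
    have h := orthonormal_iff_ite.mp hM.eigenvectorBasis.orthonormal (p i) (p j)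
    have h2 : (p i = p j) = (i = j) := by
      simp [hpinj.eq_iff]
    simpa [PiLp.inner_apply, dotProduct, h2, hvdef, mul_comm] using h
  -- dot products of images
  have hWvdot : ∀ i j, (W *ᵥ v i) ⬝ᵥ (W *ᵥ v j) = if i = j then μ (p j) else 0 := by
    intro i j
    have h1 : v i ⬝ᵥ ((Wᵀ * W) *ᵥ v j) = (W *ᵥ v i) ⬝ᵥ (W *ᵥ v j) := by
      rw [← Matrix.mulVec_mulVec, Matrix.dotProduct_mulVec, Matrix.vecMul_transpose]
    rw [← h1, heig j, dotProduct_smul, horth i j]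
    by_cases h : i = j <;> simp [h]
  have hWv0 : ∀ i, μ (p i) = 0 → W *ᵥ v i = 0 := by
    intro i h0
    have := hWvdot i i
    rw [if_pos rfl, h0] at this
    exact dotProduct_self_eq_zero.mp this
  -- counting: eigenvalues beyond index r vanish
  have hcard : (Finset.univ.filter fun k : Fin n => μ (p k) ≠ 0).card ≤ r := by
    have h1 : (Finset.univ.filter fun k : Fin n => μ (p k) ≠ 0).card
        = (Finset.univ.filter fun k : Fin n => μ k ≠ 0).card := by
      apply Finset.card_bij (fun k _ => p k)
      · intro a ha; simp only [Finset.mem_filter, Finset.mem_univ, true_and] at ha ⊢; exact ha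
      · intro a _ b _ h; exact hpinj h
      · intro b hb
        refine ⟨Fin.rev ((Tuple.sort μ).symm b), ?_, ?_⟩
        · simp only [Finset.mem_filter, Finset.mem_univ, true_and] at hb ⊢
          simpa [hpdef] using hb
        · simp [hpdef]
    rw [h1]
    have h2 : (Finset.univ.filter fun k : Fin n => μ k ≠ 0).card
        = Fintype.card {i // μ i ≠ 0} := (Fintype.card_subtype _).symm
    rw [h2]
    calc Fintype.card {i // μ i ≠ 0} = (Wᵀ * W).rank := hM.rank_eq_card_non_zero_eigs.symm
      _ = W.rank := Matrix.rank_transpose_mul_self W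
      _ ≤ r := hrank
  have hzero : ∀ i : Fin n, r ≤ (i : ℕ) → μ (p i) = 0 := by
    intro i hi
    by_contra hne
    have hmono : ∀ k, k ≤ i → μ (p k) ≠ 0 := by
      intro k hk
      have h := Tuple.monotone_sort μ (Fin.rev_le_rev.mpr hk)
      have hlt : 0 < μ (p i) := lt_of_le_of_ne (hμ0 _) (Ne.symm hne)
      have : μ (p i) ≤ μ (p k) := h
      exact ne_of_gt (lt_of_lt_of_le hlt this)
    have hsub : Finset.Iic i ⊆ Finset.univ.filter fun k : Fin n => μ (p k) ≠ 0 := by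
      intro k hk
      simp only [Finset.mem_filter, Finset.mem_univ, true_and]
      exact hmono k (Finset.mem_Iic.mp hk)
    have hc := Finset.card_le_card hsub
    rw [Fin.card_Iic] at hc
    omega
  -- r-indexed data
  set e : Fin r → Fin n := Fin.castLE hrn with hedef
  have heinj : Function.Injective e := Fin.castLE_injective hrn
  have hsval : ∀ j : Fin r, sval W (j : ℕ) = σ' (e j) := by
    intro j
    have hj : (j : ℕ) < n := lt_of_lt_of_le j.isLt hrn
    rw [sval, dif_pos hj]
    rfl
  have hσle : ∀ j : Fin r, σ' (e j) ≤ s j := fun j => (hsval j) ▸ hσ j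
  set t : Fin r → ℝ := fun j => σ' (e j) / s j with htdef
  have ht0 : ∀ j, 0 ≤ t j := fun j => div_nonneg (hσ0 _) (hs j).le
  have ht1 : ∀ j, t j ≤ 1 := fun j => (div_le_one (hs j)).mpr (hσle j)
  set α : Fin r → ℝ := fun j => (Real.sqrt (1 + t j) - Real.sqrt (1 - t j)) / 2 with hαdef
  set β : Fin r → ℝ := fun j => (Real.sqrt (1 + t j) + Real.sqrt (1 - t j)) / 2 with hβdef
  have ha2 : ∀ j, Real.sqrt (1 + t j) ^ 2 = 1 + t j := fun j =>
    Real.sq_sqrt (by linarith [ht0 j])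
  have hb2 : ∀ j, Real.sqrt (1 - t j) ^ 2 = 1 - t j := fun j =>
    Real.sq_sqrt (by linarith [ht1 j])
  have key1 : ∀ j, α j ^ 2 + β j ^ 2 = 1 := by
    intro j
    have := ha2 j; have := hb2 j
    simp only [hαdef, hβdef]
    nlinarith [ha2 j, hb2 j]
  have key2 : ∀ j, 2 * (α j * β j) * s j = σ' (e j) := by
    intro j
    have h : 2 * (α j * β j) = t j := by
      simp only [hαdef, hβdef]
      nlinarith [ha2 j, hb2 j]
    rw [h, htdef]
    exact div_mul_cancel₀ _ (ne_of_gt (hs j))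
  have hβ1 : ∀ j, σ' (e j) = 0 → β j = 1 ∧ α j = 0 := by
    intro j h0
    have ht : t j = 0 := by simp [htdef, h0]
    constructor <;> simp [hβdef, hαdef, ht]
  -- left singular vectors
  set u : Fin r → (Fin m → ℝ) := fun j => (σ' (e j))⁻¹ • (W *ᵥ v (e j)) with hudef
  have hμzero_of_σ : ∀ j : Fin r, σ' (e j) = 0 → μ (p (e j)) = 0 := by
    intro j h0
    have := hσsq (e j)
    rw [h0] at this
    simpa using this.symm
  have hu : ∀ j, σ' (e j) • u j = W *ᵥ v (e j) := by
    intro j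
    by_cases h : σ' (e j) = 0
    · have h2 : W *ᵥ v (e j) = 0 := hWv0 _ (hμzero_of_σ j h)
      rw [h, h2, zero_smul]
    · rw [hudef]
      simp only [smul_smul, mul_inv_cancel₀ h, one_smul]
  have huu : ∀ i j : Fin r, u i ⬝ᵥ u j =
      if i = j then (σ' (e i))⁻¹ ^ 2 * μ (p (e i)) else 0 := by
    intro i j
    rw [hudef]
    simp only [smul_dotProduct, dotProduct_smul, hWvdot, heinj.eq_iff]
    by_cases h : i = j
    · subst h; simp [pow_two]; ring
    · simp [h]
  -- the matrices
  refine ⟨Matrix.of (fun j k => α j * u j k), Matrix.of (fun j k => β j * v (e j) k), ?_, ?_⟩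
  · ext i j
    have e1 : ∑ k, (α i * u i k) * (α j * u j k) = α i * α j * (u i ⬝ᵥ u j) := by
      rw [dotProduct, Finset.mul_sum]
      exact Finset.sum_congr rfl fun k _ => by ring
    have e2 : ∑ k, (β i * v (e i) k) * (β j * v (e j) k) = β i * β j * (v (e i) ⬝ᵥ v (e j)) := by
      rw [dotProduct, Finset.mul_sum]
      exact Finset.sum_congr rfl fun k _ => by ring
    simp only [Matrix.add_apply, Matrix.mul_apply, Matrix.transpose_apply, Matrix.of_apply]
    rw [e1, e2, huu, horth]
    simp only [heinj.eq_iff]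
    by_cases h : i = j
    · subst h
      rw [if_pos rfl, if_pos rfl, Matrix.one_apply_eq, mul_one]
      by_cases h0 : σ' (e i) = 0
      · obtain ⟨hb, ha⟩ := hβ1 i h0
        rw [hμzero_of_σ i h0, hb, ha]
        ring
      · have : (σ' (e i))⁻¹ ^ 2 * μ (p (e i)) = 1 := by
          rw [← hσsq (e i), ← mul_pow, inv_mul_cancel₀ h0, one_pow]
        rw [this]
        have := key1 i
        nlinarith [key1 i]
    · rw [if_neg h, if_neg h, Matrix.one_apply_ne h]
      ring
  · ext k l
    have hrhs : ((2 : ℝ) • ((Matrix.of fun j k => α j * u j k)ᵀ * Matrix.diagonal s *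
        (Matrix.of fun j k => β j * v (e j) k))) k l
        = ∑ j, 2 * ((α j * u j k) * s j * (β j * v (e j) l)) := by
      rw [Matrix.smul_apply, Matrix.mul_apply]
      simp only [Matrix.mul_diagonal, Matrix.transpose_apply, Matrix.of_apply, smul_eq_mul,
        Finset.mul_sum]
    rw [hrhs]
    have hterm : ∀ j : Fin r, 2 * ((α j * u j k) * s j * (β j * v (e j) l))
        = (W *ᵥ v (e j)) k * v (e j) l := by
      intro j
      have h3 : σ' (e j) * u j k = (W *ᵥ v (e j)) k := by
        have := congrFun (hu j) k
        simpa using this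
      calc 2 * ((α j * u j k) * s j * (β j * v (e j) l))
          = (2 * (α j * β j) * s j) * u j k * v (e j) l := by ring
        _ = σ' (e j) * u j k * v (e j) l := by rw [key2 j]
        _ = (W *ᵥ v (e j)) k * v (e j) l := by rw [h3]
    rw [Finset.sum_congr rfl fun j _ => hterm j]
    -- completeness of the eigenbasis
    have hVm : (Matrix.of v) * (Matrix.of v)ᵀ = (1 : Matrix (Fin n) (Fin n) ℝ) := by
      ext a b
      have := horth a b
      simp only [Matrix.mul_apply, Matrix.transpose_apply, Matrix.of_apply, Matrix.one_apply]
      simpa [dotProduct] using this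
    have hVm2 := mul_eq_one_comm.mp hVm
    have hcomp : ∀ a c : Fin n, ∑ i, v i a * v i c = if a = c then 1 else 0 := by
      intro a c
      have h := congrFun (congrFun hVm2 a) c
      simpa [Matrix.mul_apply, Matrix.one_apply] using h
    set g : Fin n → ℝ := fun i => (W *ᵥ v i) k * v i l with hgdef
    have hsumn : ∑ i, g i = W k l := by
      calc ∑ i, g i = ∑ i, ∑ a, W k a * v i a * v i l := by
            refine Finset.sum_congr rfl fun i _ => ?_
            simp only [hgdef, Matrix.mulVec, dotProduct, Finset.sum_mul]
        _ = ∑ a, ∑ i, W k a * v i a * v i l := Finset.sum_comm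
        _ = ∑ a, W k a * (if a = l then 1 else 0) := by
            refine Finset.sum_congr rfl fun a _ => ?_
            rw [← hcomp a l, Finset.mul_sum]
            exact Finset.sum_congr rfl fun i _ => by ring
        _ = W k l := by simp
    have hg0 : ∀ i : Fin n, r ≤ (i : ℕ) → g i = 0 := by
      intro i hi
      have : W *ᵥ v i = 0 := hWv0 i (hzero i hi)
      simp [hgdef, this]
    set G : ℕ → ℝ := fun x => if h : x < n then g ⟨x, h⟩ else 0 with hGdef
    have hGr : ∀ j : Fin r, g (e j) = G (j : ℕ) := by
      intro j
      have hj : (j : ℕ) < n := lt_of_lt_of_le j.isLt hrn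
      rw [hGdef]
      simp only [dif_pos hj]
      rfl
    calc W k l = ∑ i, g i := hsumn.symm
      _ = ∑ x ∈ Finset.range n, G x := by
          rw [← Fin.sum_univ_eq_sum_range G n]
          refine Finset.sum_congr rfl fun i _ => ?_
          simp [hGdef]
      _ = ∑ x ∈ Finset.range r, G x := by
          refine (Finset.sum_subset (Finset.range_subset_range.mpr hrn) ?_).symm
          intro x hx hnx
          simp only [Finset.mem_range] at hx hnx
          rw [hGdef]
          simp only [dif_pos hx]
          exact hg0 ⟨x, hx⟩ (le_of_not_gt hnx)
      _ = ∑ j : Fin r, G (j : ℕ) := (Fin.sum_univ_eq_sum_range G r).symm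
      _ = ∑ j : Fin r, (W *ᵥ v (e j)) k * v (e j) l := by
          exact Finset.sum_congr rfl fun j _ => (hGr j).symm
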